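/- Assume the Harer–Zagier polynomial identity: for n ≥ 1, ∑_{k≥1} a_{n,k} x^k = (2n-1)!! · ∑_{k≥1} 2^{k-1} C(n,k-1) C(x,k) as polynomials in x, where a_{n,k} are integers. Then a_{n,1} = (2n-1)!!/(n+1) if n is even, and a_{n,1} = 0 if n is odd. -/

import Mathlib

open Polynomial

lemma desc_coeff_one : ∀ k : ℕ, (descPochhammer ℚ (k + 1)).coeff 1 = (-1) ^ k * (Nat.factorial k : ℚ) := by
  intro k
  induction k with
  | zero => simp [descPochhammer_one]
  | succ k ih =>
      have h0 : (descPochhammer ℚ (k + 1)).coeff 0 = 0 := by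
        rw [Polynomial.coeff_zero_eq_eval_zero]; simp
      rw [descPochhammer_succ_right, mul_sub, Polynomial.coeff_sub]
      have hx : (descPochhammer ℚ (k + 1) * X).coeff 1 = (descPochhammer ℚ (k + 1)).coeff 0 :=
        Polynomial.coeff_mul_X _ 0
      have hc : (descPochhammer ℚ (k + 1) * ((k + 1 : ℕ) : ℚ[X])).coeff 1
          = (descPochhammer ℚ (k + 1)).coeff 1 * ((k : ℚ) + 1) := by
        rw [show ((k + 1 : ℕ) : ℚ[X]) = Polynomial.C ((k : ℚ) + 1) by
          rw [map_add, Polynomial.C_1, Polynomial.C_eq_natCast]; push_cast; ring,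
          Polynomial.coeff_mul_C]
      rw [hx, hc, h0, ih, Nat.factorial_succ]
      push_cast
      ring

lemma binom_sum (n : ℕ) :
    ((n : ℚ) + 1) * ∑ j ∈ Finset.range (n + 1), (-2 : ℚ) ^ j * (n.choose j) * ((j : ℚ) + 1)⁻¹
      = if Even n then 1 else 0 := by
  rw [Finset.mul_sum]
  have key : ∀ j ∈ Finset.range (n + 1),
      ((n : ℚ) + 1) * ((-2 : ℚ) ^ j * (n.choose j) * ((j : ℚ) + 1)⁻¹)
        = (-2 : ℚ) ^ j * ((n + 1).choose (j + 1)) := by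
    intro j _
    have h := Nat.add_one_mul_choose_eq n j
    have hq : ((n : ℚ) + 1) * (n.choose j) = ((n + 1).choose (j + 1)) * ((j : ℚ) + 1) := by
      exact_mod_cast congrArg (Nat.cast : ℕ → ℚ) h
    have hj : ((j : ℚ) + 1) ≠ 0 := by positivity
    field_simp
    linear_combination hq
  rw [Finset.sum_congr rfl key]
  have expand : ∑ m ∈ Finset.range (n + 2), ((n + 1).choose m : ℚ) * (-2 : ℚ) ^ m
      = ((-2 : ℚ) + 1) ^ (n + 1) := by
    rw [(Commute.all (-2 : ℚ) 1).add_pow]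
    apply Finset.sum_congr rfl
    intro m _
    simp [mul_comm]
  have split : ∑ m ∈ Finset.range (n + 2), ((n + 1).choose m : ℚ) * (-2 : ℚ) ^ m
      = 1 + ∑ j ∈ Finset.range (n + 1), ((n + 1).choose (j + 1) : ℚ) * (-2 : ℚ) ^ (j + 1) := by
    rw [Finset.sum_range_succ']
    simp [add_comm]
  have hsum : ∑ j ∈ Finset.range (n + 1), ((n + 1).choose (j + 1) : ℚ) * (-2 : ℚ) ^ (j + 1)
      = ((-2 : ℚ) + 1) ^ (n + 1) - 1 := by
    rw [← expand, split]; ring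
  have : ∑ j ∈ Finset.range (n + 1), (-2 : ℚ) ^ j * ((n + 1).choose (j + 1))
      = (-2 : ℚ)⁻¹ * (((-2 : ℚ) + 1) ^ (n + 1) - 1) := by
    rw [← hsum, Finset.mul_sum]
    apply Finset.sum_congr rfl
    intro j _
    rw [pow_succ]
    ring
  rw [this]
  norm_num
  rcases Nat.even_or_odd n with he | ho
  · rw [if_pos he, Odd.neg_one_pow (Even.add_one he)]
    norm_num
  · rw [if_neg (Nat.not_even_iff_odd.mpr ho), Even.neg_one_pow (Odd.add_one ho)]
    norm_num

theorem stmt_10 (n : ℕ) (hn : 1 ≤ n) (a : ℕ → ℤ)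
    (hHZ : (∑ k ∈ Finset.Icc 1 (2 * n), Polynomial.C ((a k : ℚ)) * X ^ k)
        = Polynomial.C ((Nat.doubleFactorial (2 * n - 1) : ℚ)) *
          ∑ k ∈ Finset.Icc 1 (2 * n),
            Polynomial.C ((2 : ℚ) ^ (k - 1) * (n.choose (k - 1)) * ((Nat.factorial k : ℚ))⁻¹)
              * descPochhammer ℚ k) :
    (a 1 : ℚ) = if Even n then (Nat.doubleFactorial (2 * n - 1) : ℚ) / (n + 1) else 0 := by
  set D : ℚ := (Nat.doubleFactorial (2 * n - 1) : ℚ) with hD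
  have hco := congrArg (fun p => Polynomial.coeff p 1) hHZ
  -- LHS
  have hL : (∑ k ∈ Finset.Icc 1 (2 * n), Polynomial.C ((a k : ℚ)) * X ^ k).coeff 1 = (a 1 : ℚ) := by
    rw [Polynomial.finset_sum_coeff]
    rw [Finset.sum_eq_single 1]
    · simp
    · intro k hk hk1
      rw [Polynomial.coeff_C_mul, Polynomial.coeff_X_pow, if_neg (fun h => hk1 h.symm), mul_zero]
    · intro h
      exact absurd (Finset.mem_Icc.mpr ⟨le_refl 1, by omega⟩) h
  rw [hL] at hco
  -- RHS
  rw [Polynomial.coeff_C_mul, Polynomial.finset_sum_coeff] at hco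
  have hR : ∀ k ∈ Finset.Icc 1 (2 * n),
      (Polynomial.C ((2 : ℚ) ^ (k - 1) * (n.choose (k - 1)) * ((Nat.factorial k : ℚ))⁻¹)
        * descPochhammer ℚ k).coeff 1
      = (-2 : ℚ) ^ (k - 1) * (n.choose (k - 1)) * ((k : ℚ))⁻¹ := by
    intro k hk
    have hk' := Finset.mem_Icc.mp hk
    obtain ⟨j, rfl⟩ : ∃ j, k = j + 1 := ⟨k - 1, by omega⟩
    rw [Polynomial.coeff_C_mul, desc_coeff_one]
    have hjf : (Nat.factorial (j + 1) : ℚ) = ((j : ℚ) + 1) * (Nat.factorial j) := by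
      rw [Nat.factorial_succ]; push_cast; ring
    simp only [Nat.add_sub_cancel]
    rw [hjf, mul_inv]
    have h1 : (Nat.factorial j : ℚ) ≠ 0 := by exact_mod_cast Nat.factorial_ne_zero j
    have h2 : ((j : ℚ) + 1) ≠ 0 := by positivity
    rw [show ((-2 : ℚ)) = (-1) * 2 by norm_num, mul_pow]
    field_simp
    ring
    push_cast; ring
  rw [Finset.sum_congr rfl hR] at hco
  -- reindex Icc 1 (2n) → range (2n)
  have hre : ∑ k ∈ Finset.Icc 1 (2 * n), (-2 : ℚ) ^ (k - 1) * (n.choose (k - 1)) * ((k : ℚ))⁻¹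
      = ∑ j ∈ Finset.range (2 * n), (-2 : ℚ) ^ j * (n.choose j) * ((j : ℚ) + 1)⁻¹ := by
    rw [← Finset.Ico_add_one_right_eq_Icc, Finset.sum_Ico_eq_sum_range]
    apply Finset.sum_congr (by norm_num)
    intro j _
    have : 1 + j - 1 = j := by omega
    rw [this]
    push_cast
    ring_nf
  rw [hre] at hco
  -- shrink to range (n+1)
  have hsub : ∑ j ∈ Finset.range (2 * n), (-2 : ℚ) ^ j * (n.choose j) * ((j : ℚ) + 1)⁻¹
      = ∑ j ∈ Finset.range (n + 1), (-2 : ℚ) ^ j * (n.choose j) * ((j : ℚ) + 1)⁻¹ := by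
    symm
    apply Finset.sum_subset
    · intro x hx
      simp only [Finset.mem_range] at *
      omega
    · intro x _ hx
      simp only [Finset.mem_range, not_lt] at hx
      rw [Nat.choose_eq_zero_of_lt (by omega)]
      simp
  rw [hsub] at hco
  have hnn : ((n : ℚ) + 1) ≠ 0 := by positivity
  have hB := binom_sum n
  have hS : ∑ j ∈ Finset.range (n + 1), (-2 : ℚ) ^ j * (n.choose j) * ((j : ℚ) + 1)⁻¹
      = (if Even n then (1 : ℚ) else 0) / ((n : ℚ) + 1) := by
    rw [eq_div_iff hnn, mul_comm]
    exact hB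
  rw [hS] at hco
  rw [hco]
  by_cases he : Even n
  · rw [if_pos he, if_pos he, mul_one_div]
  · rw [if_neg he, if_neg he, zero_div, mul_zero]
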